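/- arXiv:1803.03295 — 2 statements merged into one kernel-verified Lean document; each statement's English description precedes it below -/
import Mathlib

section
/- Let (C_k)_{k∈ℕ} be independent, mean-zero, real random variables and (a_{k,n})_{k,n∈ℕ} deterministic coefficients with |a_{k,n} C_k| ≤ b_{k,n} almost surely, where b_{k,n} ≤ C k^γ / n for constants C > 0 and 0 < γ < 1/2. Then for every N ∈ ℕ, E[(Σ_{k=1}^n a_{k,n} C_k)^{2N}] ≤ c_N n^{N(2γ-1)} for some constant c_N depending only on N, C, γ. -/
open MeasureTheory ProbabilityTheory Filter

/-!
Expanding the power, `E[(∑ k ∈ s, X k)^(2N)]` is the sum over tuples `g : Fin (2N) → s` of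
`E[∏ i, X (g i)]`. If some value of `g` is taken only once, independence splits that centered
factor off and the term vanishes. The remaining tuples take at most `N` distinct values, so there
are at most `(N + 1) n^N N^(2N)` of them, and each term is at most `D^(2N)` where
`D = C n^γ / n` bounds `|a k n * C_k|` for `k ≤ n`. Hence the moment is
`O(n^N (n^γ / n)^(2N)) = O(n^(N (2γ - 1)))`.
-/

open Finset

lemma exists_singleton_fiber_of_card_lt_two_mul_card_image {κ ι : Type*} [Fintype κ]
    [DecidableEq ι] (g : κ → ι) (h : Fintype.card κ < 2 * #(univ.image g)) :
    ∃ i₀, ∀ i, i ≠ i₀ → g i ≠ g i₀ := by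
  by_contra! hrep
  refine h.not_ge (mul_card_image_le_card univ 2 fun c hc => ?_)
  obtain ⟨i, -, rfl⟩ := mem_image.mp hc
  obtain ⟨j, hji, hgj⟩ := hrep i
  exact one_lt_card.mpr ⟨j, by simp [hgj], i, by simp, hji⟩

lemma card_filter_powerset_card_le {α : Type*} [DecidableEq α] (s : Finset α) (hs : s.Nonempty)
    (N : ℕ) :
    #{t ∈ s.powerset | #t ≤ N} ≤ (N + 1) * #s ^ N := by
  have hsub : {t ∈ s.powerset | #t ≤ N} ⊆ (range (N + 1)).biUnion (s.powersetCard ·) := by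
    intro t ht
    rw [mem_filter, mem_powerset] at ht
    exact mem_biUnion.mpr
      ⟨#t, mem_range.mpr (Nat.lt_succ_of_le ht.2), mem_powersetCard.mpr ⟨ht.1, rfl⟩⟩
  calc #{t ∈ s.powerset | #t ≤ N}
      ≤ ∑ j ∈ range (N + 1), #(s.powersetCard j) := (card_le_card hsub).trans card_biUnion_le
    _ ≤ ∑ _j ∈ range (N + 1), #s ^ N := by
        refine sum_le_sum fun j hj => ?_
        rw [card_powersetCard]
        exact (Nat.choose_le_pow _ _).trans
          (Nat.pow_le_pow_right hs.card_pos (Nat.lt_succ_iff.mp (mem_range.mp hj)))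
    _ = (N + 1) * #s ^ N := by simp

lemma card_filter_piFinset_card_image_le {κ ι : Type*} [Fintype κ] [DecidableEq κ]
    [DecidableEq ι] (s : Finset ι) (hs : s.Nonempty) (N : ℕ) :
    #{g ∈ Fintype.piFinset (fun _ : κ => s) | #(univ.image g) ≤ N}
      ≤ (N + 1) * #s ^ N * N ^ Fintype.card κ := by
  set T := {t ∈ s.powerset | #t ≤ N}
  have hsub : {g ∈ Fintype.piFinset (fun _ : κ => s) | #(univ.image g) ≤ N}
      ⊆ T.biUnion fun t => Fintype.piFinset fun _ : κ => t := by
    intro g hg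
    rw [mem_filter, Fintype.mem_piFinset] at hg
    refine mem_biUnion.mpr ⟨univ.image g, mem_filter.mpr ⟨mem_powerset.mpr ?_, hg.2⟩, ?_⟩
    · simpa [subset_iff] using hg.1
    · simp [Fintype.mem_piFinset]
  calc _ ≤ ∑ t ∈ T, #(Fintype.piFinset fun _ : κ => t) :=
        (card_le_card hsub).trans card_biUnion_le
    _ ≤ ∑ _t ∈ T, N ^ Fintype.card κ := by
        refine sum_le_sum fun t ht => ?_
        rw [Fintype.card_piFinset, prod_const, card_univ]
        exact Nat.pow_le_pow_left (mem_filter.mp ht).2 _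
    _ = #T * N ^ Fintype.card κ := by simp
    _ ≤ (N + 1) * #s ^ N * N ^ Fintype.card κ :=
        Nat.mul_le_mul_right _ (card_filter_powerset_card_le s hs N)

namespace ProbabilityTheory

variable {Ω ι : Type*} [MeasurableSpace Ω] {μ : Measure Ω} {X : ι → Ω → ℝ}

lemma iIndepFun.integral_fun_prod_eq_zero_of_singleton_fiber {κ : Type*} [Fintype κ]
    (hX : iIndepFun X μ) (hmeas : ∀ k, Measurable (X k)) {g : κ → ι} {i₀ : κ}
    (hfiber : ∀ i, i ≠ i₀ → g i ≠ g i₀) (hmean : ∫ ω, X (g i₀) ω ∂μ = 0) :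
    ∫ ω, ∏ i, X (g i) ω ∂μ = 0 := by
  classical
  set T := (univ.erase i₀).image g
  have hdisj : Disjoint {g i₀} T := by
    simpa [T, eq_comm] using fun i hi => hfiber i hi
  have hT : ∀ i : {i // i ≠ i₀}, g i ∈ T := fun i => mem_image_of_mem _ (by simpa using i.2)
  have hφ : Measurable fun y : ({g i₀} : Finset ι) → ℝ => y ⟨g i₀, mem_singleton_self _⟩ :=
    measurable_pi_apply _
  have hψ : Measurable fun y : T → ℝ => ∏ i : {i // i ≠ i₀}, y ⟨g i, hT i⟩ :=
    Finset.measurable_prod _ fun i _ => measurable_pi_apply _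
  have hind : IndepFun (X (g i₀)) (fun ω => ∏ i : {i // i ≠ i₀}, X (g i) ω) μ :=
    (hX.indepFun_finset {g i₀} T hdisj hmeas).comp hφ hψ
  rw [show (fun ω => ∏ i, X (g i) ω) = fun ω => X (g i₀) ω * ∏ i : {i // i ≠ i₀}, X (g i) ω
    from funext fun ω => Fintype.prod_eq_mul_prod_subtype_ne _ i₀,
    hind.integral_fun_mul_eq_mul_integral (hmeas _).aestronglyMeasurable
    (Finset.measurable_prod _ fun i _ => hmeas _).aestronglyMeasurable, hmean, zero_mul]

lemma ae_abs_prod_le_pow {κ : Type*} [Fintype κ] {s : Finset ι} {D : ℝ}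
    (hbound : ∀ k ∈ s, ∀ᵐ ω ∂μ, |X k ω| ≤ D) {g : κ → ι} (hg : ∀ i, g i ∈ s) :
    ∀ᵐ ω ∂μ, |∏ i, X (g i) ω| ≤ D ^ Fintype.card κ := by
  filter_upwards [ae_all_iff.mpr fun i => hbound (g i) (hg i)] with ω hω
  calc |∏ i, X (g i) ω| = ∏ i, |X (g i) ω| := abs_prod _ _
    _ ≤ ∏ _i : κ, D := prod_le_prod (fun i _ => abs_nonneg _) fun i _ => hω i
    _ = D ^ Fintype.card κ := by rw [prod_const, card_univ]

lemma iIndepFun.integral_sum_pow_two_mul_le [IsProbabilityMeasure μ] [DecidableEq ι]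
    (hX : iIndepFun X μ) (hmeas : ∀ k, Measurable (X k)) {s : Finset ι} (hs : s.Nonempty)
    (hmean : ∀ k ∈ s, ∫ ω, X k ω ∂μ = 0) {D : ℝ} (hbound : ∀ k ∈ s, ∀ᵐ ω ∂μ, |X k ω| ≤ D)
    (N : ℕ) :
    ∫ ω, (∑ k ∈ s, X k ω) ^ (2 * N) ∂μ ≤ (N + 1) * #s ^ N * N ^ (2 * N) * D ^ (2 * N) := by
  set P := Fintype.piFinset fun _ : Fin (2 * N) => s
  have hP : ∀ g ∈ P, ∀ i, g i ∈ s := fun g hg => Fintype.mem_piFinset.mp hg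
  have hprod_bound : ∀ g ∈ P, ∀ᵐ ω ∂μ, ‖∏ i, X (g i) ω‖ ≤ D ^ (2 * N) := fun g hg => by
    simpa only [Real.norm_eq_abs, Fintype.card_fin] using ae_abs_prod_le_pow hbound (hP g hg)
  have hprod_int : ∀ g ∈ P, Integrable (fun ω => ∏ i, X (g i) ω) μ := fun g hg =>
    .of_bound (Finset.measurable_prod _ fun i _ => hmeas _).aestronglyMeasurable _
      (hprod_bound g hg)
  have hvanish : ∀ g ∈ P, N < #(univ.image g) → ∫ ω, ∏ i, X (g i) ω ∂μ = 0 := by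
    intro g hg hN
    obtain ⟨i₀, hi₀⟩ :=
      exists_singleton_fiber_of_card_lt_two_mul_card_image g (by rw [Fintype.card_fin]; omega)
    exact hX.integral_fun_prod_eq_zero_of_singleton_fiber hmeas hi₀ (hmean _ (hP g hg i₀))
  calc ∫ ω, (∑ k ∈ s, X k ω) ^ (2 * N) ∂μ = ∑ g ∈ P, ∫ ω, ∏ i, X (g i) ω ∂μ := by
        simp_rw [sum_pow']
        exact integral_finsetSum P hprod_int
    _ = ∑ g ∈ P with #(univ.image g) ≤ N, ∫ ω, ∏ i, X (g i) ω ∂μ :=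
        (sum_filter_of_ne fun g hg hne => not_lt.mp (mt (hvanish g hg) hne)).symm
    _ ≤ #{g ∈ P | #(univ.image g) ≤ N} • D ^ (2 * N) := by
        refine sum_le_card_nsmul _ _ _ fun g hg => (le_abs_self _).trans ?_
        simpa using norm_integral_le_of_norm_le_const (hprod_bound g (mem_filter.mp hg).1)
    _ ≤ (N + 1) * #s ^ N * N ^ (2 * N) * D ^ (2 * N) := by
        rw [nsmul_eq_mul]
        gcongr ?_ * _
        · exact (even_two_mul N).pow_nonneg D
        · have := card_filter_piFinset_card_image_le (κ := Fin (2 * N)) s hs N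
          rw [Fintype.card_fin] at this
          exact_mod_cast this

end ProbabilityTheory

theorem stmt_2_general {Ω : Type*} [MeasureSpace Ω] [IsProbabilityMeasure (ℙ : Measure Ω)]
    (Ck : ℕ → Ω → ℝ)
    (hmeas : ∀ k, Measurable (Ck k))
    (hindep : iIndepFun Ck ℙ)
    (hmean : ∀ k, ∫ ω, Ck k ω ∂ℙ = 0)
    (a b : ℕ → ℕ → ℝ) (C γ : ℝ) (hC : 0 < C) (hγ0 : 0 < γ)
    (hab : ∀ k n : ℕ, k ≤ n → ∀ᵐ ω ∂ℙ, |a k n * Ck k ω| ≤ b k n)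
    (hb : ∀ k n : ℕ, k ≤ n → b k n ≤ C * (k : ℝ) ^ γ / n) :
    ∀ N : ℕ, ∃ c : ℝ, ∀ n : ℕ, 1 ≤ n →
      ∫ ω, (∑ k ∈ Finset.Icc 1 n, a k n * Ck k ω) ^ (2 * N) ∂ℙ
        ≤ c * (n : ℝ) ^ ((N : ℝ) * (2 * γ - 1)) := by
  intro N
  refine ⟨(N + 1) * N ^ (2 * N) * C ^ (2 * N), fun n hn => ?_⟩
  have hn0 : (0 : ℝ) < n := by exact_mod_cast hn
  have hbound : ∀ k ∈ Icc 1 n, ∀ᵐ ω ∂ℙ, |a k n * Ck k ω| ≤ C * (n : ℝ) ^ γ / n := by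
    intro k hk
    have hkn := (mem_Icc.mp hk).2
    filter_upwards [hab k n hkn] with ω hω
    refine hω.trans ((hb k n hkn).trans ?_)
    gcongr
  have hscaled_indep : iIndepFun (fun k ω => a k n * Ck k ω) ℙ :=
    hindep.comp (fun k x => a k n * x) fun k => measurable_const_mul _
  have hpow : (n : ℝ) ^ N * ((n : ℝ) ^ γ / n) ^ (2 * N) = (n : ℝ) ^ ((N : ℝ) * (2 * γ - 1)) := by
    rw [div_pow, ← Real.rpow_natCast (n : ℝ) N, ← Real.rpow_natCast ((n : ℝ) ^ γ),
      ← Real.rpow_natCast (n : ℝ) (2 * N), ← Real.rpow_mul hn0.le, ← mul_div_assoc,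
      ← Real.rpow_add hn0, ← Real.rpow_sub hn0]
    push_cast
    ring_nf
  calc ∫ ω, (∑ k ∈ Icc 1 n, a k n * Ck k ω) ^ (2 * N) ∂ℙ
      ≤ (N + 1) * (#(Icc 1 n) : ℝ) ^ N * N ^ (2 * N) * (C * (n : ℝ) ^ γ / n) ^ (2 * N) :=
        hscaled_indep.integral_sum_pow_two_mul_le (fun k => (hmeas k).const_mul _)
          ⟨1, by simpa using hn⟩ (fun k _ => by rw [integral_const_mul, hmean, mul_zero])
          hbound N
    _ = (N + 1) * N ^ (2 * N) * C ^ (2 * N) * (n : ℝ) ^ ((N : ℝ) * (2 * γ - 1)) := by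
        rw [Nat.card_Icc, Nat.add_sub_cancel, ← hpow, mul_div_assoc, mul_pow]
        ring

/-- Moment bound for weighted sums of independent centered bounded variables
(estimate (2.10) of the paper). -/
theorem stmt_2 {Ω : Type*} [MeasureSpace Ω] [IsProbabilityMeasure (ℙ : Measure Ω)]
    (Ck : ℕ → Ω → ℝ)
    (hmeas : ∀ k, Measurable (Ck k))
    (hindep : iIndepFun Ck ℙ)
    (hint : ∀ k, Integrable (Ck k) ℙ)
    (hmean : ∀ k, ∫ ω, Ck k ω ∂ℙ = 0)
    (a b : ℕ → ℕ → ℝ) (C γ : ℝ) (hC : 0 < C) (hγ0 : 0 < γ) (hγ : γ < 1 / 2)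
    (hab : ∀ k n : ℕ, k ≤ n → ∀ᵐ ω ∂ℙ, |a k n * Ck k ω| ≤ b k n)
    (hb : ∀ k n : ℕ, k ≤ n → b k n ≤ C * (k : ℝ) ^ γ / n) :
    ∀ N : ℕ, ∃ c : ℝ, ∀ n : ℕ, 1 ≤ n →
      ∫ ω, (∑ k ∈ Finset.Icc 1 n, a k n * Ck k ω) ^ (2 * N) ∂ℙ
        ≤ c * (n : ℝ) ^ ((N : ℝ) * (2 * γ - 1)) :=
  stmt_2_general Ck hmeas hindep hmean a b C γ hC hγ0 hab hb
end

section
/- Let (C_k)_{k∈ℕ} be independent, mean-zero random variables with |a_{k,n} C_k| ≤ C k^γ / n almost surely for 0 < γ < 1/2. Then for every ε > 0, Σ_n P(|Σ_{k=1}^n a_{k,n} C_k| > ε) < ∞, and consequently limsup_{n→∞} |Σ_{k=1}^n a_{k,n} C_k| ≤ ε almost surely; since ε is arbitrary, the sum converges to 0 almost surely. -/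
open MeasureTheory ProbabilityTheory Filter

/-!
For `k ≤ n` each summand `a k n * C_k` is centered and bounded by `C n^γ / n`, so by Hoeffding's
lemma it is sub-Gaussian with variance proxy `C² n^(2γ-2)`; by independence the sum `S_n` is
sub-Gaussian with proxy `C² n^(2γ-1)`, and the Chernoff bound gives
`P(|S_n| > ε) ≤ 2 exp(-ε² n^(1-2γ) / (2C²))`. Since `1 - 2γ > 0` these tails are summable, and
Borel–Cantelli along `ε = 1/(m+1)` yields `S_n → 0` almost surely.
-/

open Real Topology

open scoped NNReal

lemma summable_exp_neg_mul_rpow {c δ : ℝ} (hc : 0 < c) (hδ : 0 < δ) :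
    Summable fun n : ℕ => exp (-c * (n : ℝ) ^ δ) := by
  have hpow : Tendsto (fun n : ℕ => (n : ℝ) ^ δ) atTop atTop :=
    (tendsto_rpow_atTop hδ).comp tendsto_natCast_atTop_atTop
  have hO := ((isLittleO_exp_neg_mul_rpow_atTop hc (-2 / δ)).comp_tendsto hpow).isBigO
  refine summable_of_isBigO_nat (summable_nat_rpow.2 (by norm_num : (-2 : ℝ) < -1))
    (hO.trans_eventuallyEq (Eventually.of_forall fun n => ?_))
  simp only [Function.comp_apply]
  rw [← rpow_mul (Nat.cast_nonneg n), mul_div_cancel₀ _ hδ.ne']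

lemma ae_tendsto_zero_of_summable_measureReal_lt_abs {Ω : Type*} [MeasurableSpace Ω]
    {μ : Measure Ω} [IsFiniteMeasure μ] {Y : ℕ → Ω → ℝ}
    (h : ∀ ε : ℝ, 0 < ε → Summable fun n => μ.real {ω | ε < |Y n ω|}) :
    ∀ᵐ ω ∂μ, Tendsto (fun n => Y n ω) atTop (𝓝 0) := by
  have hBC : ∀ m : ℕ, ∀ᵐ ω ∂μ, ∀ᶠ n in atTop, ω ∉ {ω | 1 / ((m : ℝ) + 1) < |Y n ω|} := by
    intro m
    apply ae_eventually_notMem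
    simpa [measureReal_def, ENNReal.ofReal_toReal (measure_ne_top μ _)] using
      (h _ Nat.one_div_pos_of_nat).tsum_ofReal_ne_top
  filter_upwards [ae_all_iff.2 hBC] with ω hω
  rw [Metric.tendsto_atTop]
  intro ε hε
  obtain ⟨m, hm⟩ := exists_nat_one_div_lt hε
  obtain ⟨N, hN⟩ := eventually_atTop.1 (hω m)
  refine ⟨N, fun n hn => ?_⟩
  simpa [Real.dist_eq] using (not_lt.1 (hN n hn)).trans_lt hm

lemma hasSubgaussianMGF_of_abs_le_of_integral_eq_zero {Ω : Type*} [MeasurableSpace Ω]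
    {μ : Measure Ω} [IsProbabilityMeasure μ] {X : Ω → ℝ} {c : ℝ≥0} (hX : AEMeasurable X μ)
    (hb : ∀ᵐ ω ∂μ, |X ω| ≤ c) (hmean : μ[X] = 0) :
    HasSubgaussianMGF X (c ^ 2) μ := by
  convert hasSubgaussianMGF_of_mem_Icc_of_integral_eq_zero hX
    (hb.mono fun ω h => abs_le.1 h) hmean
  ext
  simp only [NNReal.coe_div, coe_nnnorm, Real.norm_eq_abs, NNReal.coe_ofNat]
  rw [sub_neg_eq_add, abs_of_nonneg (by positivity)]
  ring

lemma ProbabilityTheory.HasSubgaussianMGF.measureReal_abs_ge_le {Ω : Type*}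
    [MeasurableSpace Ω] {μ : Measure Ω} {X : Ω → ℝ} {c : ℝ≥0}
    (h : HasSubgaussianMGF X c μ) {ε : ℝ} (hε : 0 ≤ ε) :
    μ.real {ω | ε ≤ |X ω|} ≤ 2 * exp (-ε ^ 2 / (2 * c)) := by
  have hsplit : {ω | ε ≤ |X ω|} = {ω | ε ≤ X ω} ∪ {ω | ε ≤ (-X) ω} := by
    ext ω
    simp [le_abs]
  calc μ.real {ω | ε ≤ |X ω|}
      ≤ μ.real {ω | ε ≤ X ω} + μ.real {ω | ε ≤ (-X) ω} := by
        rw [hsplit]; exact measureReal_union_le _ _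
    _ ≤ exp (-ε ^ 2 / (2 * c)) + exp (-ε ^ 2 / (2 * c)) :=
        add_le_add (h.measure_ge_le hε) (h.neg.measure_ge_le hε)
    _ = 2 * exp (-ε ^ 2 / (2 * c)) := by ring

lemma measureReal_abs_sum_ge_le_of_abs_le {Ω ι : Type*} [MeasurableSpace Ω] {μ : Measure Ω}
    [IsProbabilityMeasure μ] {X : ι → Ω → ℝ} (hindep : iIndepFun X μ) {s : Finset ι}
    {c : ℝ≥0} (hmeas : ∀ i ∈ s, AEMeasurable (X i) μ) (hb : ∀ i ∈ s, ∀ᵐ ω ∂μ, |X i ω| ≤ c)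
    (hmean : ∀ i ∈ s, μ[X i] = 0) {ε : ℝ} (hε : 0 ≤ ε) :
    μ.real {ω | ε ≤ |∑ i ∈ s, X i ω|} ≤ 2 * exp (-ε ^ 2 / (2 * (s.card * c ^ 2))) := by
  have hsum := HasSubgaussianMGF.sum_of_iIndepFun hindep fun i hi =>
    hasSubgaussianMGF_of_abs_le_of_integral_eq_zero (hmeas i hi) (hb i hi) (hmean i hi)
  simpa using hsum.measureReal_abs_ge_le hε

lemma measureReal_lt_abs_sum_mul_le {Ω : Type*} [MeasurableSpace Ω] {μ : Measure Ω}
    [IsProbabilityMeasure μ] {X : ℕ → Ω → ℝ} (hmeas : ∀ k, Measurable (X k))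
    (hindep : iIndepFun X μ) (hmean : ∀ k, μ[X k] = 0) {a : ℕ → ℕ → ℝ} {C γ : ℝ}
    (hC : 0 < C) (hγ : 0 ≤ γ)
    (hab : ∀ k n : ℕ, k ≤ n → ∀ᵐ ω ∂μ, |a k n * X k ω| ≤ C * (k : ℝ) ^ γ / n)
    {ε : ℝ} (hε : 0 < ε) (n : ℕ) :
    μ.real {ω | ε < |∑ k ∈ Finset.Icc 1 n, a k n * X k ω|} ≤
      2 * exp (-(ε ^ 2 / (2 * C ^ 2)) * (n : ℝ) ^ (1 - 2 * γ)) := by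
  rcases n.eq_zero_or_pos with rfl | hn
  · simp [not_lt.2 hε.le]
    positivity
  have hn' : (0 : ℝ) < n := by exact_mod_cast hn
  let c : ℝ≥0 := ⟨C * n ^ γ / n, by positivity⟩
  have hb : ∀ k ∈ Finset.Icc 1 n, ∀ᵐ ω ∂μ, |a k n * X k ω| ≤ c := by
    intro k hk
    have hkn := (Finset.mem_Icc.1 hk).2
    filter_upwards [hab k n hkn] with ω h
    exact h.trans (show C * (k : ℝ) ^ γ / n ≤ C * n ^ γ / n by gcongr)
  have hvariance : (n : ℝ) * (c : ℝ) ^ 2 = C ^ 2 / (n : ℝ) ^ (1 - 2 * γ) := by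
    have hpow : (n : ℝ) ^ (1 - 2 * γ) * ((n : ℝ) ^ γ) ^ 2 = n := by
      rw [← rpow_natCast, ← rpow_mul hn'.le, ← rpow_add hn',
        show 1 - 2 * γ + γ * (2 : ℕ) = (1 : ℝ) by push_cast; ring, rpow_one]
    rw [eq_div_iff (rpow_pos_of_pos hn' _).ne', show (c : ℝ) = C * n ^ γ / n from rfl]
    generalize (n : ℝ) ^ γ = x at hpow ⊢
    generalize (n : ℝ) ^ (1 - 2 * γ) = y at hpow ⊢
    field_simp
    linear_combination hpow
  have hHoeffding := measureReal_abs_sum_ge_le_of_abs_le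
    (hindep.comp (fun k x => a k n * x) fun k => measurable_const_mul _)
    (fun k _ => ((hmeas k).const_mul _).aemeasurable) hb
    (fun k _ => by simp [integral_const_mul, hmean]) hε.le
  calc μ.real {ω | ε < |∑ k ∈ Finset.Icc 1 n, a k n * X k ω|}
      ≤ μ.real {ω | ε ≤ |∑ k ∈ Finset.Icc 1 n, a k n * X k ω|} :=
        measureReal_mono (Set.ofPred_subset_ofPred.2 fun ω => le_of_lt)
    _ ≤ _ := hHoeffding
    _ = _ := by
        rw [Nat.card_Icc, Nat.add_sub_cancel, hvariance]
        field_simp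

theorem stmt_3_general {Ω : Type*} [MeasureSpace Ω] [IsProbabilityMeasure (ℙ : Measure Ω)]
    (Ck : ℕ → Ω → ℝ)
    (hmeas : ∀ k, Measurable (Ck k))
    (hindep : iIndepFun Ck ℙ)
    (hmean : ∀ k, ∫ ω, Ck k ω ∂ℙ = 0)
    (a : ℕ → ℕ → ℝ) (C γ : ℝ) (hC : 0 < C) (hγ0 : 0 < γ) (hγ : γ < 1 / 2)
    (hab : ∀ k n : ℕ, k ≤ n → ∀ᵐ ω ∂ℙ, |a k n * Ck k ω| ≤ C * (k : ℝ) ^ γ / n) :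
    (∀ ε : ℝ, 0 < ε →
      Summable fun n : ℕ =>
        (ℙ {ω | ε < |∑ k ∈ Finset.Icc 1 n, a k n * Ck k ω|}).toReal) ∧
    ∀ᵐ ω ∂ℙ, Tendsto (fun n : ℕ => ∑ k ∈ Finset.Icc 1 n, a k n * Ck k ω)
      atTop (nhds 0) := by
  have htail : ∀ ε : ℝ, 0 < ε → Summable fun n : ℕ =>
      (ℙ : Measure Ω).real {ω | ε < |∑ k ∈ Finset.Icc 1 n, a k n * Ck k ω|} := fun ε hε =>
    Summable.of_nonneg_of_le (fun _ => measureReal_nonneg)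
      (measureReal_lt_abs_sum_mul_le hmeas hindep hmean hC hγ0.le hab hε)
      ((summable_exp_neg_mul_rpow (by positivity) (by linarith)).mul_left 2)
  exact ⟨htail, ae_tendsto_zero_of_summable_measureReal_lt_abs htail⟩

/-- Borel–Cantelli consequence of the moment bound: the weighted sums of independent
centered bounded variables converge to `0` almost surely, with summable tail
probabilities at every level `ε > 0`. -/
theorem stmt_3 {Ω : Type*} [MeasureSpace Ω] [IsProbabilityMeasure (ℙ : Measure Ω)]
    (Ck : ℕ → Ω → ℝ)
    (hmeas : ∀ k, Measurable (Ck k))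
    (hindep : iIndepFun Ck ℙ)
    (hint : ∀ k, Integrable (Ck k) ℙ)
    (hmean : ∀ k, ∫ ω, Ck k ω ∂ℙ = 0)
    (a : ℕ → ℕ → ℝ) (C γ : ℝ) (hC : 0 < C) (hγ0 : 0 < γ) (hγ : γ < 1 / 2)
    (hab : ∀ k n : ℕ, k ≤ n → ∀ᵐ ω ∂ℙ, |a k n * Ck k ω| ≤ C * (k : ℝ) ^ γ / n) :
    (∀ ε : ℝ, 0 < ε →
      Summable fun n : ℕ =>
        (ℙ {ω | ε < |∑ k ∈ Finset.Icc 1 n, a k n * Ck k ω|}).toReal) ∧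
    ∀ᵐ ω ∂ℙ, Tendsto (fun n : ℕ => ∑ k ∈ Finset.Icc 1 n, a k n * Ck k ω)
      atTop (nhds 0) :=
  stmt_3_general Ck hmeas hindep hmean a C γ hC hγ0 hγ hab
end
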